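/- arXiv:1303.5999 — 4 statements merged into one kernel-verified Lean document; each statement's English description precedes it below -/
import Mathlib

section
/- Let G be a graph of order n, and let ℓ = min{ j : d(G,j) = C(n,j) } (the least cardinality such that every j-subset of vertices dominates). Then the minimum degree of G equals n − ℓ, and for every non-dominating set T of cardinality ℓ − 1 there exists a vertex v with closed neighborhood N[v] = V \ T. -/
/-- `S` dominates `G`: every vertex is in `S` or adjacent to a member of `S`. -/
def Dominates {V : Type*} (G : SimpleGraph V) (S : Set V) : Prop :=
  ∀ v : V, v ∈ S ∨ ∃ u ∈ S, G.Adj u v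

/-- number of dominating sets of cardinality `i`. -/
noncomputable def numDom {V : Type*} [Fintype V] (G : SimpleGraph V) (i : ℕ) : ℕ :=
  Nat.card {S : Finset V // S.card = i ∧ Dominates G ↑S}

/-- the domination polynomial `D(G,x) = Σ_{i=1}^{n} d(G,i) x^i`. -/
noncomputable def domPoly {V : Type*} [Fintype V] (G : SimpleGraph V) : Polynomial ℤ :=
  ∑ i ∈ Finset.Icc 1 (Fintype.card V), (numDom G i : Polynomial ℤ) * Polynomial.X ^ i

/-- the join of two vertex-disjoint graphs. -/
def GJoin {α β : Type*} (G : SimpleGraph α) (H : SimpleGraph β) : SimpleGraph (α ⊕ β) where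
  Adj x y := match x, y with
    | Sum.inl a, Sum.inl b => G.Adj a b
    | Sum.inr a, Sum.inr b => H.Adj a b
    | _, _ => True
  symm := ⟨by rintro (a|a) (b|b) h <;> simp_all [SimpleGraph.adj_comm]⟩
  loopless := ⟨by rintro (a|a) h <;> simp_all⟩

/-- `H_t(a)`: a copy of `K_a` and a copy of `K_{a+t}`, connected by a matching
from `K_a` into `K_{a+t}`. -/
def Hgraph (a t : ℕ) : SimpleGraph (Fin a ⊕ Fin (a + t)) where
  Adj x y := match x, y with
    | Sum.inl i, Sum.inl j => i ≠ j
    | Sum.inr i, Sum.inr j => i ≠ j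
    | Sum.inl i, Sum.inr j => (j : ℕ) = (i : ℕ)
    | Sum.inr i, Sum.inl j => (i : ℕ) = (j : ℕ)
  symm := ⟨by rintro (i|i) (j|j) h <;> simp_all <;> omega⟩
  loopless := ⟨by rintro (i|i) h <;> simp_all⟩

/-! A set `S` fails to dominate exactly when it misses some closed neighbourhood `N[v]`. Hence
every `j`-set dominates iff `j` exceeds the largest complement of a closed neighbourhood,
`n - δ - 1`; so `ℓ = n - δ`. A non-dominating `(ℓ - 1)`-set `T` misses some `N[v]`, and
`|N[v]| ≥ δ + 1 = n - |T|` forces `N[v] = V \ T`. -/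

open Finset

namespace SimpleGraph

variable {V : Type*} [Fintype V] (G : SimpleGraph V) [DecidableRel G.Adj]

theorem minDegree_le_card : G.minDegree ≤ Fintype.card V := by
  cases isEmpty_or_nonempty V
  · simp [minDegree_of_subsingleton]
  · exact G.minDegree_lt_card.le

variable [DecidableEq V]

def closedNeighborFinset (v : V) : Finset V := insert v (G.neighborFinset v)

variable {G}

theorem mem_closedNeighborFinset {u v : V} :
    u ∈ G.closedNeighborFinset v ↔ u = v ∨ G.Adj v u := by
  simp [closedNeighborFinset]

theorem coe_closedNeighborFinset (v : V) :
    (G.closedNeighborFinset v : Set V) = insert v (G.neighborSet v) := by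
  simp [closedNeighborFinset]

theorem card_closedNeighborFinset (v : V) : #(G.closedNeighborFinset v) = G.degree v + 1 := by
  rw [closedNeighborFinset, card_insert_of_notMem (by simp), card_neighborFinset_eq_degree]

theorem not_dominates_iff_exists_disjoint (S : Finset V) :
    ¬ Dominates G ↑S ↔ ∃ v, Disjoint (G.closedNeighborFinset v) S := by
  simp only [Dominates, not_forall, not_or, not_exists, not_and, Finset.disjoint_left,
    mem_closedNeighborFinset, mem_coe]
  refine exists_congr fun v => ⟨fun ⟨hv, hadj⟩ u hu huS => ?_, fun h => ⟨h (.inl rfl), ?_⟩⟩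
  · rcases hu with rfl | hvu
    exacts [hv huS, hadj u huS hvu.symm]
  · exact fun u huS huv => h (.inr huv.symm) huS

theorem forall_card_eq_dominates_iff (j : ℕ) :
    (∀ S : Finset V, #S = j → Dominates G ↑S) ↔ Fintype.card V - G.minDegree ≤ j := by
  constructor
  · intro h
    by_contra! hj
    have : Nonempty V := Fintype.card_pos_iff.mp (by omega)
    obtain ⟨v, hv⟩ := G.exists_minimal_degree_vertex
    have hcard : j ≤ #(G.closedNeighborFinset v)ᶜ := by
      rw [card_compl, card_closedNeighborFinset]
      omega
    obtain ⟨S, hSsub, rfl⟩ := exists_subset_card_eq hcard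
    exact (not_dominates_iff_exists_disjoint S).mpr
      ⟨v, disjoint_right.mpr fun _ hu => mem_compl.mp (hSsub hu)⟩ (h S rfl)
  · rintro hj S rfl
    by_contra hS
    obtain ⟨v, hdisj⟩ := (not_dominates_iff_exists_disjoint S).mp hS
    have hsum : #(G.closedNeighborFinset v) + #S ≤ Fintype.card V :=
      card_union_of_disjoint hdisj ▸ card_le_univ _
    have := G.minDegree_le_degree v
    rw [card_closedNeighborFinset] at hsum
    omega

theorem closedNeighborFinset_eq_compl_of_disjoint {v : V} {T : Finset V}
    (hdisj : Disjoint (G.closedNeighborFinset v) T)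
    (hT : Fintype.card V ≤ #T + G.minDegree + 1) :
    G.closedNeighborFinset v = Tᶜ := by
  refine eq_of_subset_of_card_le (subset_compl_iff_disjoint_right.mpr hdisj) ?_
  rw [card_compl, card_closedNeighborFinset]
  have := G.minDegree_le_degree v
  omega

end SimpleGraph

theorem numDom_eq_choose_iff {V : Type*} [Fintype V] (G : SimpleGraph V) (j : ℕ) :
    numDom G j = (Fintype.card V).choose j ↔ ∀ S : Finset V, #S = j → Dominates G ↑S := by
  classical
  have hnumDom : numDom G j = #((powersetCard j univ).filter fun S : Finset V => Dominates G ↑S) := by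
    rw [numDom, Nat.card_eq_fintype_card, Fintype.card_subtype]
    congr 1
    ext S
    simp
  rw [hnumDom, ← card_univ, ← card_powersetCard, card_filter_eq_iff]
  simp

theorem minDegree_eq_of_domPoly_general {V : Type*} [Fintype V]
    (G : SimpleGraph V) [DecidableRel G.Adj] (ℓ : ℕ)
    (hℓ : IsLeast {j : ℕ | numDom G j = (Fintype.card V).choose j} ℓ) :
    G.minDegree = Fintype.card V - ℓ ∧
      ∀ T : Finset V, T.card = ℓ - 1 → ¬ Dominates G ↑T →
        ∃ v : V, insert v (G.neighborSet v) = Set.univ \ ↑T := by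
  classical
  have hset : {j : ℕ | numDom G j = (Fintype.card V).choose j} =
      Set.Ici (Fintype.card V - G.minDegree) := by
    ext j
    exact (numDom_eq_choose_iff G j).trans (G.forall_card_eq_dominates_iff j)
  have hℓ_eq : ℓ = Fintype.card V - G.minDegree := hℓ.unique (hset ▸ isLeast_Ici)
  have hδ := G.minDegree_le_card
  refine ⟨by omega, fun T hT hT_dom => ?_⟩
  obtain ⟨v, hdisj⟩ := (G.not_dominates_iff_exists_disjoint T).mp hT_dom
  refine ⟨v, ?_⟩
  rw [← G.coe_closedNeighborFinset, G.closedNeighborFinset_eq_compl_of_disjoint hdisj (by omega),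
    coe_compl, Set.compl_eq_univ_sdiff]

/-- If `ℓ = min {j : d(G,j) = C(n,j)}`, then `δ(G) = n − ℓ`, and every
non-dominating set `T` of cardinality `ℓ − 1` is the complement of a closed
neighborhood. -/
theorem minDegree_eq_of_domPoly {V : Type*} [Fintype V] [Nonempty V]
    (G : SimpleGraph V) [DecidableRel G.Adj] (ℓ : ℕ)
    (hℓ : IsLeast {j : ℕ | numDom G j = (Fintype.card V).choose j} ℓ) :
    G.minDegree = Fintype.card V - ℓ ∧
      ∀ T : Finset V, T.card = ℓ - 1 → ¬ Dominates G ↑T →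
        ∃ v : V, insert v (G.neighborSet v) = Set.univ \ ↑T :=
  minDegree_eq_of_domPoly_general G ℓ hℓ
end

section
/- Let k ∈ ℕ and let F be a family of k-element subsets of a finite set V with |F| = C(x,k) for some real x ≥ k. Then the shadow ∂F (the family of (k−1)-subsets contained in some member of F) satisfies |∂F| ≥ C(x, k−1); moreover, if equality holds then x is an integer and F consists of all k-subsets of some x-element subset X of V. -/
/-- Generalized binomial coefficient `C(x,k) = x(x−1)⋯(x−k+1)/k!` for real `x`. -/
noncomputable def realChoose (x : ℝ) (k : ℕ) : ℝ :=
  (∏ i ∈ Finset.range k, (x - i)) / (Nat.factorial k)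

/-!
Lovász's shifting proof. Fix a vertex `a`. The `({a}, {j})`-compressions keep `|𝒜|`, do not
enlarge the shadow and strictly decrease the number of members avoiding `a`, so we may assume
that `𝒜` is shifted towards `a`. Let `L` be the link of `a` and `R` the members avoiding `a`;
then `∂R ⊆ L` and `|∂𝒜| = |L| + |∂L|`. Induction on `R` forces `|L| ≥ C(x-1, k-1)`, and
induction on `L` with Pascal's rule gives `|∂𝒜| ≥ C(y+1, k-1) ≥ C(x, k-1)` where
`|L| = C(y, k-1)`. In the equality case `L` is complete, hence so is `𝒜`.

Completeness lifts back through each compression: if the `({a}, {j})`-compression of `𝒜` is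
the complete family on `X` while `𝒜` is not, then `a ∈ X`, `j ∉ X`, and every `(k-1)`-subset
`t` of `X \ {a}` has `t ∪ {a}` or `t ∪ {j}` in `𝒜`. If both kinds of `t` occur, their shadows
overlap (the Johnson graph is connected), which forces `|∂𝒜| > C(|X|, k-1)`; otherwise `𝒜` is
the complete family on `(X \ {a}) ∪ {j}`.
-/

open Finset
open scoped FinsetFamily

section RealChoose

open Polynomial

lemma realChoose_eq_eval_descPochhammer (x : ℝ) (k : ℕ) :
    realChoose x k = (descPochhammer ℝ k).eval x / k.factorial := by
  rw [realChoose, descPochhammer_eval_eq_prod_range]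

lemma realChoose_natCast (n k : ℕ) : realChoose n k = n.choose k := by
  rw [realChoose_eq_eval_descPochhammer, descPochhammer_eval_eq_descFactorial,
    Nat.descFactorial_eq_factorial_mul_choose, Nat.cast_mul, mul_div_cancel_left₀]
  positivity

lemma realChoose_succ_succ (x : ℝ) (k : ℕ) :
    realChoose (x + 1) (k + 1) = realChoose x k + realChoose x (k + 1) := by
  have hleft : (descPochhammer ℝ (k + 1)).eval (x + 1) = (x + 1) * (descPochhammer ℝ k).eval x :=
    by simp [descPochhammer_succ_left]
  simp only [realChoose_eq_eval_descPochhammer, hleft, descPochhammer_succ_eval,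
    Nat.factorial_succ, Nat.cast_mul]
  field_simp
  push_cast
  ring

lemma realChoose_nonneg {x : ℝ} {k : ℕ} (hx : (k : ℝ) - 1 ≤ x) : 0 ≤ realChoose x k := by
  rw [realChoose_eq_eval_descPochhammer]
  exact div_nonneg (descPochhammer_nonneg hx) (Nat.cast_nonneg _)

lemma realChoose_lt_realChoose {k : ℕ} {x y : ℝ} (hx : (k : ℝ) ≤ x) (hxy : x < y) :
    realChoose x (k + 1) < realChoose y (k + 1) := by
  simp only [realChoose_eq_eval_descPochhammer, descPochhammer_succ_eval]
  gcongr ?_ / _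
  calc (descPochhammer ℝ k).eval x * (x - k)
      ≤ (descPochhammer ℝ k).eval y * (x - k) := by
        refine mul_le_mul_of_nonneg_right ?_ (by linarith)
        exact monotoneOn_descPochhammer_eval k (by simp; linarith) (by simp; linarith) hxy.le
    _ < (descPochhammer ℝ k).eval y * (y - k) := by
        gcongr
        exact descPochhammer_pos (by linarith)

lemma realChoose_le_realChoose {k : ℕ} {x y : ℝ} (hx : (k : ℝ) ≤ x) (hxy : x ≤ y) :
    realChoose x (k + 1) ≤ realChoose y (k + 1) := by
  obtain rfl | hxy := hxy.eq_or_lt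
  · exact le_rfl
  · exact (realChoose_lt_realChoose hx hxy).le

lemma one_le_realChoose {x : ℝ} {k : ℕ} (hx : (k : ℝ) ≤ x) : 1 ≤ realChoose x k := by
  cases k with
  | zero => simp [realChoose]
  | succ k =>
    calc (1 : ℝ) = realChoose (k + 1 : ℕ) (k + 1) := by
          rw [realChoose_natCast, Nat.choose_self, Nat.cast_one]
      _ ≤ realChoose x (k + 1) := realChoose_le_realChoose (by push_cast; linarith) hx

lemma exists_realChoose_eq {k : ℕ} (hk : 1 ≤ k) {c : ℝ} (hc : 1 ≤ c) :
    ∃ z : ℝ, (k : ℝ) ≤ z ∧ realChoose z k = c := by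
  set t : ℝ := c * k.factorial
  have ht : 1 ≤ t := one_le_mul_of_one_le_of_one_le hc (by exact_mod_cast k.factorial_pos)
  have hcont : ContinuousOn (realChoose · k) (Set.Icc (k : ℝ) (k - 1 + t)) := by
    simp only [realChoose_eq_eval_descPochhammer]
    fun_prop
  have hupper : c ≤ realChoose (k - 1 + t) k := by
    rw [realChoose_eq_eval_descPochhammer, le_div_iff₀ (by positivity)]
    calc c * k.factorial = t := rfl
      _ ≤ t ^ k := le_self_pow₀ ht (by omega)
      _ = ((k - 1 + t) - k + 1) ^ k := by ring
      _ ≤ _ := pow_le_descPochhammer_eval (by linarith)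
  obtain ⟨z, hz, hzc⟩ := intermediate_value_Icc (by linarith) hcont
    ⟨by simpa [realChoose_natCast] using hc, hupper⟩
  exact ⟨z, hz.1, hzc⟩

lemma Finset.nonempty_of_card_eq_realChoose {β : Type*} {s : Finset β} {x : ℝ} {k : ℕ}
    (hx : (k : ℝ) ≤ x) (hs : (#s : ℝ) = realChoose x k) : s.Nonempty :=
  card_pos.1 <| Nat.one_le_cast.1 <| (one_le_realChoose hx).trans_eq hs.symm

end RealChoose

section

variable {α : Type*} [DecidableEq α]

lemma memberSubfamily_shadow (a : α) (𝒜 : Finset (Finset α)) :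
    (∂ 𝒜).memberSubfamily a = ∂ (𝒜.memberSubfamily a) := by
  ext t
  simp only [mem_memberSubfamily, mem_shadow_iff]
  constructor
  · rintro ⟨⟨s, hs, b, hb, hst⟩, hat⟩
    have has : a ∈ s := mem_of_mem_erase (hst ▸ mem_insert_self a t)
    have hab : a ≠ b := ne_of_mem_erase (hst ▸ mem_insert_self a t)
    refine ⟨s.erase a, ⟨by rwa [insert_erase has], notMem_erase a s⟩, b,
      mem_erase.2 ⟨hab.symm, hb⟩, ?_⟩
    rw [erase_right_comm, hst, erase_insert hat]
  · rintro ⟨s, ⟨hs, has⟩, b, hb, rfl⟩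
    have hab : a ≠ b := (ne_of_mem_of_not_mem hb has).symm
    exact ⟨⟨insert a s, hs, b, mem_insert_of_mem hb, erase_insert_of_ne hab⟩,
      fun h => has (mem_of_mem_erase h)⟩

def IsShiftedTo (a : α) (𝒜 : Finset (Finset α)) : Prop :=
  ∀ s ∈ 𝒜, a ∉ s → ∀ b ∈ s, insert a (s.erase b) ∈ 𝒜

namespace IsShiftedTo

variable {a : α} {𝒜 : Finset (Finset α)}

lemma shadow_nonMemberSubfamily_subset (h : IsShiftedTo a 𝒜) :
    ∂ (𝒜.nonMemberSubfamily a) ⊆ 𝒜.memberSubfamily a := by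
  intro t ht
  obtain ⟨s, hs, b, hb, rfl⟩ := mem_shadow_iff.1 ht
  rw [mem_nonMemberSubfamily] at hs
  exact mem_memberSubfamily.2 ⟨h s hs.1 hs.2 b hb, fun ha => hs.2 (mem_of_mem_erase ha)⟩

lemma nonMemberSubfamily_shadow (h : IsShiftedTo a 𝒜) :
    (∂ 𝒜).nonMemberSubfamily a = 𝒜.memberSubfamily a := by
  ext t
  simp only [mem_nonMemberSubfamily, mem_memberSubfamily, mem_shadow_iff_insert_mem]
  constructor
  · rintro ⟨⟨b, hbt, hb⟩, hat⟩
    refine ⟨?_, hat⟩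
    obtain rfl | hba := eq_or_ne b a
    · exact hb
    · simpa [erase_insert hbt] using
        h _ hb (by simp [hba.symm, hat]) b (mem_insert_self b t)
  · rintro ⟨ht, hat⟩
    exact ⟨⟨a, hat, ht⟩, hat⟩

lemma card_shadow (h : IsShiftedTo a 𝒜) :
    #(∂ 𝒜) = #(𝒜.memberSubfamily a) + #(∂ (𝒜.memberSubfamily a)) := by
  rw [← card_memberSubfamily_add_card_nonMemberSubfamily a (∂ 𝒜), memberSubfamily_shadow,
    h.nonMemberSubfamily_shadow, add_comm]

lemma card_nonMemberSubfamily_lt (h : IsShiftedTo a 𝒜) (h𝒜 : 𝒜.Nonempty) (hempty : ∅ ∉ 𝒜) :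
    #(𝒜.nonMemberSubfamily a) < #𝒜 := by
  rw [← card_memberSubfamily_add_card_nonMemberSubfamily a 𝒜, lt_add_iff_pos_left, card_pos]
  obtain ⟨s, hs⟩ := h𝒜
  by_cases has : a ∈ s
  · exact ⟨s.erase a, mem_memberSubfamily.2 ⟨by rwa [insert_erase has], notMem_erase a s⟩⟩
  · obtain ⟨b, hb⟩ := nonempty_iff_ne_empty.2 (ne_of_mem_of_not_mem hs hempty)
    exact ⟨s.erase b, mem_memberSubfamily.2 ⟨h s hs has b hb, fun h' => has (mem_of_mem_erase h')⟩⟩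

lemma subset_powersetCard_insert (h : IsShiftedTo a 𝒜) {r : ℕ} {Y : Finset α}
    (h𝒜 : (𝒜 : Set (Finset α)).Sized (r + 2))
    (hY : 𝒜.memberSubfamily a ⊆ powersetCard (r + 1) Y) :
    𝒜 ⊆ powersetCard (r + 2) (insert a Y) := by
  intro s hs
  refine mem_powersetCard.2 ⟨?_, h𝒜 hs⟩
  by_cases has : a ∈ s
  · have hmem : s.erase a ∈ 𝒜.memberSubfamily a :=
      mem_memberSubfamily.2 ⟨by rwa [insert_erase has], notMem_erase a s⟩
    rw [← insert_erase has]
    exact insert_subset_insert a (mem_powersetCard.1 (hY hmem)).1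
  · intro z hz
    obtain ⟨b, hb, hbz⟩ := exists_mem_ne (by rw [h𝒜 hs]; omega) z
    have hmem : s.erase b ∈ 𝒜.memberSubfamily a :=
      mem_memberSubfamily.2 ⟨h s hs has b hb, fun h' => has (mem_of_mem_erase h')⟩
    exact mem_insert_of_mem ((mem_powersetCard.1 (hY hmem)).1 (mem_erase.2 ⟨hbz.symm, hz⟩))

lemma eq_powersetCard_insert (h : IsShiftedTo a 𝒜) {r : ℕ} {Y : Finset α}
    (h𝒜 : (𝒜 : Set (Finset α)).Sized (r + 2)) (hY : 𝒜.memberSubfamily a = powersetCard (r + 1) Y)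
    (hrY : r + 1 ≤ #Y) (hcard : #𝒜 = (#Y + 1).choose (r + 2)) :
    #(insert a Y) = #Y + 1 ∧ 𝒜 = powersetCard (r + 2) (insert a Y) := by
  have haY : a ∉ Y := by
    intro haY
    obtain ⟨t, hat, htY, ht⟩ :=
      exists_subsuperset_card_eq (singleton_subset_iff.2 haY) (by simp) hrY
    have htL : t ∈ 𝒜.memberSubfamily a := hY ▸ mem_powersetCard.2 ⟨htY, ht⟩
    exact (mem_memberSubfamily.1 htL).2 (singleton_subset_iff.1 hat)
  have hcardY : #(insert a Y) = #Y + 1 := card_insert_of_notMem haY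
  refine ⟨hcardY, eq_of_subset_of_card_le (h.subset_powersetCard_insert h𝒜 hY.le) ?_⟩
  rw [card_powersetCard, hcardY, hcard]

end IsShiftedTo

def LovaszShadowBound (k : ℕ) (𝒜 : Finset (Finset α)) : Prop :=
  ∀ x : ℝ, (k : ℝ) ≤ x → (#𝒜 : ℝ) = realChoose x k →
    realChoose x (k - 1) ≤ #(∂ 𝒜) ∧
      ((#(∂ 𝒜) : ℝ) = realChoose x (k - 1) →
        ∃ n : ℕ, x = n ∧ ∃ X : Finset α, #X = n ∧ 𝒜 = powersetCard k X)

namespace IsShiftedTo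

variable {a : α} {𝒜 : Finset (Finset α)} {r : ℕ}

lemma le_card_memberSubfamily (h : IsShiftedTo a 𝒜)
    (hR : LovaszShadowBound (r + 2) (𝒜.nonMemberSubfamily a)) {x : ℝ} (hx : (r : ℝ) + 2 ≤ x)
    (hcard : (#𝒜 : ℝ) = realChoose x (r + 2)) :
    realChoose (x - 1) (r + 1) ≤ #(𝒜.memberSubfamily a) := by
  -- Otherwise `#R = C(z, r + 2)` with `z > x - 1`, and `C(x-1, r+1) < C(z, r+1) ≤ #∂R ≤ #L`.
  by_contra! hL
  have hsplit : ((#(𝒜.memberSubfamily a) : ℕ) : ℝ) + #(𝒜.nonMemberSubfamily a) = #𝒜 := by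
    exact_mod_cast card_memberSubfamily_add_card_nonMemberSubfamily a 𝒜
  have hpascal : realChoose x (r + 2) =
      realChoose (x - 1) (r + 1) + realChoose (x - 1) (r + 2) := by
    simpa using realChoose_succ_succ (x - 1) (r + 1)
  have hRgt : realChoose (x - 1) (r + 2) < #(𝒜.nonMemberSubfamily a) := by linarith
  have hR1 : (1 : ℝ) ≤ #(𝒜.nonMemberSubfamily a) := Nat.one_le_cast.2 <| Nat.cast_pos.1 <|
    (realChoose_nonneg (by push_cast; linarith)).trans_lt hRgt
  obtain ⟨z, hz, hRz⟩ := exists_realChoose_eq (k := r + 2) (by omega) hR1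
  push_cast at hz
  have hxz : x - 1 < z := by
    by_contra! hzx
    have := realChoose_le_realChoose (k := r + 1) (by push_cast; linarith) hzx
    linarith
  have hshadow := (hR z (by push_cast; linarith) hRz.symm).1
  have hsub : (#(∂ (𝒜.nonMemberSubfamily a)) : ℝ) ≤ #(𝒜.memberSubfamily a) := by
    exact_mod_cast card_le_card h.shadow_nonMemberSubfamily_subset
  have := realChoose_lt_realChoose (k := r) (by linarith) hxz
  simp only [show r + 2 - 1 = r + 1 from rfl] at hshadow
  linarith

theorem lovaszShadowBound (h : IsShiftedTo a 𝒜) (h𝒜 : (𝒜 : Set (Finset α)).Sized (r + 2))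
    (hL : LovaszShadowBound (r + 1) (𝒜.memberSubfamily a))
    (hR : LovaszShadowBound (r + 2) (𝒜.nonMemberSubfamily a)) :
    LovaszShadowBound (r + 2) 𝒜 := by
  intro x hx hcard
  push_cast at hx
  simp only [show r + 2 - 1 = r + 1 from rfl]
  have hLx := h.le_card_memberSubfamily hR hx hcard
  obtain ⟨y, hy, hLy⟩ := exists_realChoose_eq (k := r + 1) (by omega)
    ((one_le_realChoose (by push_cast; linarith)).trans hLx)
  have hxy : x ≤ y + 1 := by
    by_contra! hyx
    have := realChoose_lt_realChoose (k := r) (by push_cast at hy; linarith)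
      (by linarith : y < x - 1)
    linarith
  obtain ⟨hLbound, hLeq⟩ := hL y hy hLy.symm
  simp only [Nat.add_sub_cancel] at hLbound hLeq
  have hshadow : (#(∂ 𝒜) : ℝ) = #(𝒜.memberSubfamily a) + #(∂ (𝒜.memberSubfamily a)) := by
    exact_mod_cast h.card_shadow
  have hmono := realChoose_le_realChoose (k := r) (by linarith) hxy
  have hpascal := realChoose_succ_succ y r
  refine ⟨by linarith, fun heq => ?_⟩
  have hxy' : x = y + 1 := by
    by_contra hne
    have := realChoose_lt_realChoose (k := r) (by linarith) (lt_of_le_of_ne hxy hne)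
    linarith
  obtain ⟨m, rfl, Y, hY, hLY⟩ := hLeq (by linarith)
  obtain ⟨hcardY, h𝒜Y⟩ := h.eq_powersetCard_insert h𝒜 hLY (hY ▸ by exact_mod_cast hy) <| by
    rw [hY, ← Nat.cast_inj (R := ℝ), hcard, hxy', ← realChoose_natCast]
    push_cast
    rfl
  exact ⟨m + 1, by rw [hxy']; push_cast; ring, insert a Y, by rw [hcardY, hY], h𝒜Y⟩

end IsShiftedTo

section Compression

variable {a j : α} {𝒜 : Finset (Finset α)} {s : Finset α}

lemma union_singleton_sdiff_singleton (h : a ≠ j) (s : Finset α) :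
    (s ∪ {a}) \ {j} = insert a (s.erase j) := by
  rw [union_comm, ← insert_eq, sdiff_singleton_eq_erase, erase_insert_of_ne h]

lemma compress_singleton_of_notMem_of_mem (ha : a ∉ s) (hj : j ∈ s) :
    UV.compress {a} {j} s = insert a (s.erase j) := by
  rw [UV.compress_of_disjoint_of_le (disjoint_singleton_left.2 ha) (singleton_subset_iff.2 hj),
    sup_eq_union, union_singleton_sdiff_singleton (ne_of_mem_of_not_mem hj ha).symm]

lemma notMem_compression_singleton (hs : s ∈ 𝒜) (hsC : s ∉ 𝓒 {a} {j} 𝒜) :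
    a ∉ s ∧ j ∈ s ∧ insert a (s.erase j) ∈ 𝓒 {a} {j} 𝒜 ∧ insert a (s.erase j) ∉ 𝒜 := by
  have hcs : UV.compress {a} {j} s ∉ 𝒜 := fun h => hsC (UV.mem_compression.2 (Or.inl ⟨hs, h⟩))
  have hcond : Disjoint {a} s ∧ {j} ≤ s := by
    by_contra hc
    exact hcs (by rwa [UV.compress, if_neg hc])
  have has : a ∉ s := disjoint_singleton_left.1 hcond.1
  have hjs : j ∈ s := singleton_subset_iff.1 hcond.2
  rw [← compress_singleton_of_notMem_of_mem has hjs]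
  exact ⟨has, hjs, UV.compress_mem_compression hs, hcs⟩

lemma mem_compression_singleton_of_notMem (haj : a ≠ j) (hs : s ∈ 𝓒 {a} {j} 𝒜) (hs𝒜 : s ∉ 𝒜) :
    a ∈ s ∧ j ∉ s ∧ insert j (s.erase a) ∈ 𝒜 := by
  refine ⟨singleton_subset_iff.1 (UV.le_of_mem_compression_of_notMem hs hs𝒜),
    disjoint_singleton_left.1 (UV.disjoint_of_mem_compression_of_notMem hs hs𝒜), ?_⟩
  rw [← union_singleton_sdiff_singleton haj.symm, ← sup_eq_union]
  exact UV.sup_sdiff_mem_of_mem_compression_of_notMem hs hs𝒜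

lemma card_shadow_compression_singleton_le (a j : α) (𝒜 : Finset (Finset α)) :
    #(∂ (𝓒 {a} {j} 𝒜)) ≤ #(∂ 𝒜) :=
  UV.card_shadow_compression_le _ _ fun x hx => ⟨j, mem_singleton_self j, by
    rw [mem_singleton.1 hx, erase_singleton, erase_singleton]
    exact UV.isCompressed_self _ _⟩

lemma card_nonMemberSubfamily_compression_lt (haj : a ≠ j) (h : 𝓒 {a} {j} 𝒜 ≠ 𝒜) :
    #((𝓒 {a} {j} 𝒜).nonMemberSubfamily a) < #(𝒜.nonMemberSubfamily a) := by
  obtain ⟨s, hs, hsC⟩ : ∃ s ∈ 𝒜, s ∉ 𝓒 {a} {j} 𝒜 := by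
    by_contra! H
    exact h (eq_of_subset_of_card_le H (UV.card_compression _ _ _).le).symm
  have has := (notMem_compression_singleton hs hsC).1
  refine card_lt_card ⟨fun t ht => ?_, fun hsub => hsC ?_⟩
  · rw [mem_nonMemberSubfamily] at ht ⊢
    by_contra ht𝒜
    exact ht.2 (mem_compression_singleton_of_notMem haj ht.1 (fun h' => ht𝒜 ⟨h', ht.2⟩)).1
  · exact (mem_nonMemberSubfamily.1 (hsub (mem_nonMemberSubfamily.2 ⟨hs, has⟩))).1

lemma IsShiftedTo.of_isCompressed (h : ∀ j, j ≠ a → UV.IsCompressed {a} {j} 𝒜) :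
    IsShiftedTo a 𝒜 := by
  intro s hs has b hb
  rw [← compress_singleton_of_notMem_of_mem has hb]
  exact (h b (ne_of_mem_of_not_mem hb has)).eq ▸ UV.compress_mem_compression hs

end Compression

section Exchange

variable {𝒟 : Finset (Finset α)} {Y : Finset α} {r : ℕ}

lemma eq_powersetCard_of_insert_erase_mem (h𝒟 : 𝒟 ⊆ powersetCard r Y) (hne : 𝒟.Nonempty)
    (hexch : ∀ s ∈ 𝒟, ∀ x ∈ s, ∀ y ∈ Y, y ∉ s → insert y (s.erase x) ∈ 𝒟) :
    𝒟 = powersetCard r Y := by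
  refine h𝒟.antisymm fun t ht => ?_
  obtain ⟨htY, htr⟩ := mem_powersetCard.1 ht
  obtain ⟨s, hs⟩ := hne
  induction hn : #(t \ s) generalizing s with
  | zero =>
    have hts : t ⊆ s := sdiff_eq_empty_iff_subset.1 (card_eq_zero.1 hn)
    rwa [eq_of_subset_of_card_le hts (by rw [htr, (mem_powersetCard.1 (h𝒟 hs)).2])]
  | succ n ih =>
    have hsr := (mem_powersetCard.1 (h𝒟 hs)).2
    obtain ⟨y, hy⟩ : (t \ s).Nonempty := card_pos.1 (by omega)
    obtain ⟨x, hx⟩ : (s \ t).Nonempty :=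
      card_pos.1 (by rw [card_sdiff_comm (hsr.trans htr.symm)]; omega)
    rw [mem_sdiff] at hx hy
    refine ih _ (hexch s hs x hx.1 y (htY hy.1) hy.2) ?_
    have hdiff : t \ insert y (s.erase x) = (t \ s).erase y := by
      ext z
      simp only [mem_sdiff, mem_insert, mem_erase]
      grind
    rw [hdiff, card_erase_of_mem (mem_sdiff.2 hy), hn, Nat.add_sub_cancel]

lemma card_powersetCard_lt_card_shadow_filter_add_card_shadow_filter (p : Finset α → Prop)
    [DecidablePred p] (hp : ∃ t ∈ powersetCard (r + 1) Y, p t)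
    (hnp : ∃ t ∈ powersetCard (r + 1) Y, ¬p t) :
    #(powersetCard r Y) <
      #(∂ ((powersetCard (r + 1) Y).filter p)) + #(∂ ((powersetCard (r + 1) Y).filter (¬p ·))) := by
  set 𝒟 := (powersetCard (r + 1) Y).filter p
  set ℰ := (powersetCard (r + 1) Y).filter (¬p ·)
  have hcover : powersetCard r Y ⊆ ∂ 𝒟 ∪ ∂ ℰ := by
    intro t ht
    obtain ⟨s, hs, -⟩ := hp
    obtain ⟨htY, htr⟩ := mem_powersetCard.1 ht
    obtain ⟨y, hy⟩ : (Y \ t).Nonempty := by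
      rw [← card_pos, card_sdiff_of_subset htY]
      have := card_le_card (mem_powersetCard.1 hs).1
      have := (mem_powersetCard.1 hs).2
      omega
    rw [mem_sdiff] at hy
    have hyt : insert y t ∈ powersetCard (r + 1) Y :=
      mem_powersetCard.2 ⟨insert_subset hy.1 htY, by rw [card_insert_of_notMem hy.2, htr]⟩
    rw [mem_union, mem_shadow_iff_insert_mem, mem_shadow_iff_insert_mem]
    by_cases hpy : p (insert y t)
    · exact Or.inl ⟨y, hy.2, mem_filter.2 ⟨hyt, hpy⟩⟩
    · exact Or.inr ⟨y, hy.2, mem_filter.2 ⟨hyt, hpy⟩⟩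
  -- the two classes share a shadow set, or the `p`-class would be closed under exchanges
  have hmeet : (∂ 𝒟 ∩ ∂ ℰ).Nonempty := by
    by_contra! hdisj
    obtain ⟨t, ht, hpt⟩ := hnp
    have h𝒟ne : 𝒟.Nonempty := let ⟨s, hs, hps⟩ := hp; ⟨s, mem_filter.2 ⟨hs, hps⟩⟩
    refine hpt (mem_filter.1 ((eq_powersetCard_of_insert_erase_mem (filter_subset _ _) h𝒟ne
      fun s hs x hx y hy hys => ?_).ge ht)).2
    by_contra hnot
    obtain ⟨hsY, hsr⟩ := mem_powersetCard.1 (mem_filter.1 hs).1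
    have hys' : y ∉ s.erase x := fun h => hys (mem_of_mem_erase h)
    have hK : insert y (s.erase x) ∈ powersetCard (r + 1) Y := mem_powersetCard.2
      ⟨insert_subset hy ((erase_subset x s).trans hsY),
        by rw [card_insert_of_notMem hys', card_erase_of_mem hx, hsr, Nat.add_sub_cancel]⟩
    have hℰ : insert y (s.erase x) ∈ ℰ := mem_filter.2 ⟨hK, fun h => hnot (mem_filter.2 ⟨hK, h⟩)⟩
    have hmem : s.erase x ∈ ∂ 𝒟 ∩ ∂ ℰ := mem_inter.2 ⟨erase_mem_shadow hs hx, by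
      simpa [erase_insert hys'] using erase_mem_shadow hℰ (mem_insert_self y _)⟩
    simp [hdisj] at hmem
  have := card_union_add_card_inter (∂ 𝒟) (∂ ℰ)
  have := card_le_card hcover
  have := card_pos.2 hmeet
  omega

end Exchange

section Transfer

variable {a j : α} {𝒜 𝒟 ℰ ℬ : Finset (Finset α)} {X : Finset α} {k r : ℕ}

lemma card_add_card_shadow_add_card_shadow_le (haj : a ≠ j) (hℬ : ℬ ⊆ ∂ 𝒜)
    (hℬaj : ∀ t ∈ ℬ, a ∉ t ∧ j ∉ t) (h𝒟 : 𝒟 ⊆ 𝒜.memberSubfamily a)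
    (hℰ : ℰ ⊆ 𝒜.memberSubfamily j) (hℰa : ∀ t ∈ ℰ, a ∉ t) :
    #ℬ + #(∂ 𝒟) + #(∂ ℰ) ≤ #(∂ 𝒜) := by
  have hsplit_a := card_memberSubfamily_add_card_nonMemberSubfamily a (∂ 𝒜)
  have hsplit_j := card_memberSubfamily_add_card_nonMemberSubfamily j ((∂ 𝒜).nonMemberSubfamily a)
  have h𝒟' : #(∂ 𝒟) ≤ #((∂ 𝒜).memberSubfamily a) :=
    card_le_card (memberSubfamily_shadow a 𝒜 ▸ shadow_mono h𝒟)
  have hℰ' : #(∂ ℰ) ≤ #(((∂ 𝒜).nonMemberSubfamily a).memberSubfamily j) := by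
    refine card_le_card fun u hu => ?_
    obtain ⟨t, ht, hut⟩ := exists_subset_of_mem_shadow hu
    have hu' := mem_memberSubfamily.1 (memberSubfamily_shadow j 𝒜 ▸ shadow_mono hℰ hu)
    rw [mem_memberSubfamily, mem_nonMemberSubfamily, mem_insert, not_or]
    exact ⟨⟨hu'.1, haj, fun h => hℰa t ht (hut h)⟩, hu'.2⟩
  have hℬ' : #ℬ ≤ #(((∂ 𝒜).nonMemberSubfamily a).nonMemberSubfamily j) :=
    card_le_card fun t ht => by simp [mem_nonMemberSubfamily, hℬ ht, hℬaj t ht]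
  omega

lemma subset_powersetCard_of_compression_eq (hC : 𝓒 {a} {j} 𝒜 = powersetCard k X)
    (h𝒜 : (𝒜 : Set (Finset α)).Sized k) (hX : ∀ s ∈ 𝒜, s ⊆ X → a ∉ s) :
    𝒜 ⊆ powersetCard k (insert j (X.erase a)) := by
  intro s hs
  refine mem_powersetCard.2 ⟨?_, h𝒜 hs⟩
  by_cases hsC : s ∈ 𝓒 {a} {j} 𝒜
  · have hsX := (mem_powersetCard.1 (hC ▸ hsC)).1
    exact (subset_erase.2 ⟨hsX, hX s hs hsX⟩).trans (subset_insert j _)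
  · obtain ⟨has, hjs, hsX, -⟩ := notMem_compression_singleton hs hsC
    have hsX := (insert_subset_iff.1 (mem_powersetCard.1 (hC ▸ hsX)).1).2
    rw [← insert_erase hjs]
    exact insert_subset_insert j (subset_erase.2 ⟨hsX, fun h => has (mem_of_mem_erase h)⟩)

lemma insert_mem_powersetCard_of_mem_powersetCard_erase {a : α} {s t : Finset α} (ha : a ∈ s)
    (ht : t ∈ powersetCard r (s.erase a)) : insert a t ∈ powersetCard (r + 1) s := by
  obtain ⟨hts, htr⟩ := mem_powersetCard.1 ht
  refine mem_powersetCard.2 ⟨insert_subset ha (hts.trans (erase_subset a s)), ?_⟩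
  rw [card_insert_of_notMem fun h => notMem_erase a s (hts h), htr]

lemma card_powersetCard_add_card_shadow_add_card_shadow_le (haj : a ≠ j)
    (hC : 𝓒 {a} {j} 𝒜 = powersetCard (r + 2) X) (haX : a ∈ X) (hjX : j ∉ X) :
    #(powersetCard (r + 1) (X.erase a))
      + #(∂ ((powersetCard (r + 1) (X.erase a)).filter (insert a · ∈ 𝒜)))
      + #(∂ ((powersetCard (r + 1) (X.erase a)).filter (insert a · ∉ 𝒜))) ≤ #(∂ 𝒜) := by
  have hfree : ∀ t ∈ powersetCard (r + 1) (X.erase a), a ∉ t ∧ j ∉ t := fun t ht =>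
    have htX := (mem_powersetCard.1 ht).1
    ⟨fun h => notMem_erase a X (htX h), fun h => hjX (mem_of_mem_erase (htX h))⟩
  have hj : ∀ t ∈ powersetCard (r + 1) (X.erase a), insert a t ∉ 𝒜 → insert j t ∈ 𝒜 := by
    intro t ht hat
    have htC : insert a t ∈ 𝓒 {a} {j} 𝒜 :=
      hC ▸ insert_mem_powersetCard_of_mem_powersetCard_erase haX ht
    simpa [erase_insert (hfree t ht).1] using (mem_compression_singleton_of_notMem haj htC hat).2.2
  refine card_add_card_shadow_add_card_shadow_le haj (fun t ht => ?_) hfree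
    (fun t ht => mem_memberSubfamily.2 ⟨(mem_filter.1 ht).2, (hfree t (mem_filter.1 ht).1).1⟩)
    (fun t ht => mem_memberSubfamily.2
      ⟨hj t (mem_filter.1 ht).1 (mem_filter.1 ht).2, (hfree t (mem_filter.1 ht).1).2⟩)
    (fun t ht => (hfree t (mem_filter.1 ht).1).1)
  rw [mem_shadow_iff_insert_mem]
  by_cases hat : insert a t ∈ 𝒜
  · exact ⟨a, (hfree t ht).1, hat⟩
  · exact ⟨j, (hfree t ht).2, hj t ht hat⟩

theorem exists_eq_powersetCard_of_compression_eq (haj : a ≠ j)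
    (h𝒜 : (𝒜 : Set (Finset α)).Sized (r + 2)) (hC : 𝓒 {a} {j} 𝒜 = powersetCard (r + 2) X)
    (hshadow : #(∂ 𝒜) ≤ (#X).choose (r + 1)) :
    ∃ X' : Finset α, #X' = #X ∧ 𝒜 = powersetCard (r + 2) X' := by
  by_cases hsub : 𝒜 ⊆ 𝓒 {a} {j} 𝒜
  · exact ⟨X, rfl, (eq_of_subset_of_card_le hsub (UV.card_compression _ _ _).le).trans hC⟩
  obtain ⟨s, hs, hsC⟩ := not_subset.1 hsub
  obtain ⟨has, hjs, hsX, hs𝒜⟩ := notMem_compression_singleton hs hsC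
  rw [hC, mem_powersetCard, insert_subset_iff] at hsX
  obtain ⟨⟨haX, hsX⟩, -⟩ := hsX
  have hjX : j ∉ X := fun hjX => hsC <| hC ▸ mem_powersetCard.2
    ⟨by rw [← insert_erase hjs]; exact insert_subset hjX hsX, h𝒜 hs⟩
  have hXY : #(X.erase a) + 1 = #X := card_erase_add_one haX
  by_cases hp : ∃ t ∈ powersetCard (r + 1) (X.erase a), insert a t ∈ 𝒜
  · have hnp : ∃ t ∈ powersetCard (r + 1) (X.erase a), insert a t ∉ 𝒜 := by
      refine ⟨s.erase j, mem_powersetCard.2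
        ⟨subset_erase.2 ⟨hsX, fun h => has (mem_of_mem_erase h)⟩, ?_⟩, hs𝒜⟩
      rw [card_erase_of_mem hjs, h𝒜 hs]
      rfl
    have hlt := card_powersetCard_lt_card_shadow_filter_add_card_shadow_filter _ hp hnp
    have hcount := card_powersetCard_add_card_shadow_add_card_shadow_le (𝒜 := 𝒜) haj hC haX hjX
    rw [card_powersetCard] at hlt hcount
    rw [← hXY, Nat.choose_succ_succ'] at hshadow
    omega
  · have hcard : #(insert j (X.erase a)) = #X := by
      rw [card_insert_of_notMem fun h => hjX (mem_of_mem_erase h), hXY]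
    refine ⟨insert j (X.erase a), hcard, eq_of_subset_of_card_le
      (subset_powersetCard_of_compression_eq hC h𝒜 fun t ht htX hat => ?_) ?_⟩
    · refine hp ⟨t.erase a, mem_powersetCard.2 ⟨erase_subset_erase a htX, ?_⟩,
        by rwa [insert_erase hat]⟩
      rw [card_erase_of_mem hat, h𝒜 ht]
      rfl
    · rw [card_powersetCard, hcard, ← UV.card_compression {a} {j} 𝒜, hC, card_powersetCard]

end Transfer

lemma Set.Sized.memberSubfamily {a : α} {𝒜 : Finset (Finset α)} {r : ℕ}
    (h𝒜 : (𝒜 : Set (Finset α)).Sized (r + 1)) :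
    ((𝒜.memberSubfamily a : Finset (Finset α)) : Set (Finset α)).Sized r := fun s hs => by
  obtain ⟨hs𝒜, has⟩ := mem_memberSubfamily.1 hs
  simpa [card_insert_of_notMem has] using h𝒜 hs𝒜

lemma Set.Sized.nonMemberSubfamily {a : α} {𝒜 : Finset (Finset α)} {r : ℕ}
    (h𝒜 : (𝒜 : Set (Finset α)).Sized r) :
    ((𝒜.nonMemberSubfamily a : Finset (Finset α)) : Set (Finset α)).Sized r :=
  h𝒜.mono fun _ hs => (mem_nonMemberSubfamily.1 hs).1

theorem LovaszShadowBound.of_compression {a j : α} {𝒜 : Finset (Finset α)} {r : ℕ} (haj : a ≠ j)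
    (h𝒜 : (𝒜 : Set (Finset α)).Sized (r + 2)) (hC : LovaszShadowBound (r + 2) (𝓒 {a} {j} 𝒜)) :
    LovaszShadowBound (r + 2) 𝒜 := by
  intro x hx hcard
  have hshadow : (#(∂ (𝓒 {a} {j} 𝒜)) : ℝ) ≤ #(∂ 𝒜) := by
    exact_mod_cast card_shadow_compression_singleton_le a j 𝒜
  obtain ⟨hbound, hequal⟩ := hC x hx (by rwa [UV.card_compression])
  refine ⟨hbound.trans hshadow, fun heq => ?_⟩
  obtain ⟨n, rfl, X, hX, hCX⟩ := hequal (le_antisymm (heq ▸ hshadow) hbound)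
  obtain ⟨X', hX', h𝒜X'⟩ := exists_eq_powersetCard_of_compression_eq haj h𝒜 hCX <| by
    rw [hX, ← Nat.cast_le (α := ℝ), heq, ← realChoose_natCast]
    rfl
  exact ⟨n, rfl, X', hX'.trans hX, h𝒜X'⟩

theorem lovaszShadowBound_one {𝒜 : Finset (Finset α)} (h𝒜 : (𝒜 : Set (Finset α)).Sized 1) :
    LovaszShadowBound 1 𝒜 := by
  intro x hx hcard
  have h𝒜X : 𝒜 = powersetCard 1 (𝒜.sup id) := by
    ext s
    rw [mem_powersetCard]
    refine ⟨fun hs => ⟨le_sup (f := id) hs, h𝒜 hs⟩, fun ⟨hs, hs1⟩ => ?_⟩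
    obtain ⟨v, rfl⟩ := card_eq_one.1 hs1
    obtain ⟨t, ht, hvt⟩ := mem_sup.1 (hs (mem_singleton_self v))
    obtain ⟨w, rfl⟩ := card_eq_one.1 (h𝒜 ht)
    rwa [← mem_singleton.1 hvt] at ht
  have hcardX : #(𝒜.sup id) = #𝒜 := by
    conv_rhs => rw [h𝒜X, card_powersetCard, Nat.choose_one_right]
  obtain ⟨s, hs⟩ := nonempty_of_card_eq_realChoose hx hcard
  obtain ⟨w, rfl⟩ := card_eq_one.1 (h𝒜 hs)
  have hshadow : ∂ 𝒜 = {∅} := eq_singleton_iff_unique_mem.2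
    ⟨by simpa using erase_mem_shadow hs (mem_singleton_self w),
      fun t ht => card_eq_zero.1 (h𝒜.shadow ht)⟩
  have hx1 : realChoose x 1 = x := by simp [realChoose]
  have hx0 : realChoose x (1 - 1) = 1 := by simp [realChoose]
  rw [hx1] at hcard
  rw [hx0, hshadow, card_singleton, Nat.cast_one]
  exact ⟨le_rfl, fun _ => ⟨#𝒜, hcard.symm, 𝒜.sup id, hcardX, h𝒜X⟩⟩

theorem lovaszShadowBound_of_sized (a : α) : ∀ (k : ℕ) (𝒜 : Finset (Finset α)), 1 ≤ k →
    (𝒜 : Set (Finset α)).Sized k → LovaszShadowBound k 𝒜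
  | 1, _, _, h𝒜 => lovaszShadowBound_one h𝒜
  | r + 2, 𝒜, _, h𝒜 => by
    by_cases hshift : IsShiftedTo a 𝒜
    · intro x hx hcard
      have hlt := hshift.card_nonMemberSubfamily_lt (nonempty_of_card_eq_realChoose hx hcard)
        fun h => by simpa using h𝒜 h
      exact hshift.lovaszShadowBound h𝒜
        (lovaszShadowBound_of_sized a (r + 1) _ (by omega) h𝒜.memberSubfamily)
        (lovaszShadowBound_of_sized a (r + 2) _ (by omega) h𝒜.nonMemberSubfamily) x hx hcard
    · obtain ⟨j, hja, hj⟩ : ∃ j, j ≠ a ∧ ¬UV.IsCompressed {a} {j} 𝒜 := by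
        by_contra! H
        exact hshift (IsShiftedTo.of_isCompressed H)
      have hlt := card_nonMemberSubfamily_compression_lt hja.symm hj
      exact (lovaszShadowBound_of_sized a (r + 2) (𝓒 {a} {j} 𝒜) (by omega)
        (h𝒜.uvCompression (by simp))).of_compression hja.symm h𝒜
termination_by k 𝒜 => (k, #𝒜, #(𝒜.nonMemberSubfamily a))

end

/-- Lovász's version of the Kruskal–Katona theorem: if `|F| = C(x,k)` with `x ≥ k`
then `|∂F| ≥ C(x,k−1)`, with equality iff `x ∈ ℕ` and `F` consists of all `k`-subsets
of some `x`-element set. -/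
theorem lovasz_kruskal_katona {V : Type*} [DecidableEq V] {k : ℕ} (hk : 1 ≤ k)
    (F : Finset (Finset V)) (hF : ∀ X ∈ F, X.card = k) (x : ℝ) (hx : (k : ℝ) ≤ x)
    (hcard : (F.card : ℝ) = realChoose x k) :
    realChoose x (k - 1) ≤ (F.shadow.card : ℝ) ∧
      ((F.shadow.card : ℝ) = realChoose x (k - 1) →
        ∃ n : ℕ, x = n ∧ ∃ X : Finset V, X.card = n ∧ F = Finset.powersetCard k X) := by
  obtain ⟨s, hs⟩ := nonempty_of_card_eq_realChoose hx hcard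
  obtain ⟨a, -⟩ : s.Nonempty := card_pos.1 (by rw [hF s hs]; omega)
  exact lovaszShadowBound_of_sized a k F hk hF x hx hcard
end

section
/- For a ≥ 3, the complement of H_0(a) is connected; consequently, for r ≥ 2 and a ≥ 3, the graphs J_r(a,t) for 0 ≤ t ≤ ⌊r/2⌋ are pairwise non-isomorphic, since the complement of J_r(a,t) has exactly r − 2t connected components of size a and t connected components of size 2a. -/
/-- `J_r(a,t)`: the join of `t` disjoint copies of `H_0(a)` (occupying the pairs of
classes `{0,1},…,{2t-2,2t-1}`) with the complete `(r-2t)`-partite graph with classes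
of size `a`.  The vertex `(i,x)` is the `x`-th vertex of the `i`-th class. -/
def Jgraph (r a t : ℕ) : SimpleGraph (Fin r × Fin a) where
  Adj x y :=
    if x.1 = y.1 then (x.1 : ℕ) < 2*t ∧ x.2 ≠ y.2
    else if (x.1 : ℕ)/2 = (y.1 : ℕ)/2 ∧ (x.1 : ℕ) < 2*t ∧ (y.1 : ℕ) < 2*t then x.2 = y.2
    else True
  symm := ⟨by
    rintro ⟨i,x⟩ ⟨j,y⟩ h
    dsimp at *
    split_ifs at h ⊢ <;> simp_all [eq_comm] <;> omega⟩
  loopless := ⟨by rintro ⟨i,x⟩ h; simp_all⟩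

/-!
The complement of `H_0(a)` is `K_{a,a}` minus a perfect matching; for `a ≥ 3` any two vertices
on one side have a common neighbour on the other, so it is connected. Complementation turns the
joins in `J_r(a,t)` into disjoint unions, so the components of `J_r(a,t)ᶜ` are the `t` copies of
`H_0(a)ᶜ`, of size `2a`, and the `r - 2t` cliques on the parts of `K_{r-2t}(a)`, of size `a`.
An isomorphism `J_r(a,t) ≃ J_r(a,t')` is also one of the complements, hence preserves the number
of components of size `2a`, which forces `t = t'`.
-/

namespace SimpleGraph

variable {V W α : Type*} {G : SimpleGraph V} {H : SimpleGraph W}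

theorem Reachable.apply_eq_of_adj {f : V → α} (hf : ∀ ⦃u v⦄, G.Adj u v → f u = f v)
    {u v : V} (h : G.Reachable u v) : f u = f v := by
  obtain ⟨p⟩ := h
  induction p with
  | nil => rfl
  | cons hadj _ ih => exact (hf hadj).trans ih

def Iso.compl (φ : G ≃g H) : Gᶜ ≃g Hᶜ :=
  { φ.toEquiv with map_rel_iff' := (Embedding.complEquiv φ.toEmbedding).map_rel_iff }

theorem Iso.natCard_connectedComponent_supp_eq (φ : G ≃g H) (k : ℕ) :
    Nat.card {C : G.ConnectedComponent // Nat.card C.supp = k}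
      = Nat.card {C : H.ConnectedComponent // Nat.card C.supp = k} :=
  Nat.card_congr <| φ.connectedComponentEquiv.subtypeEquiv fun C => by
    rw [Nat.card_congr (ConnectedComponent.isoEquivSupp φ C)]

section Fibres

variable {f : V → α}

noncomputable def ConnectedComponent.equivOfReachableIff
    (hf : ∀ u v, G.Reachable u v ↔ f u = f v) (hs : Function.Surjective f) :
    G.ConnectedComponent ≃ α :=
  Equiv.ofBijective (ConnectedComponent.lift f fun u v p _ => (hf u v).1 p.reachable)
    ⟨fun C D => C.ind₂ (fun u v h => ConnectedComponent.sound ((hf u v).2 h)) D, fun b =>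
      let ⟨v, hv⟩ := hs b; ⟨G.connectedComponentMk v, hv⟩⟩

theorem ConnectedComponent.supp_eq_preimage (hf : ∀ u v, G.Reachable u v ↔ f u = f v) (v : V) :
    (G.connectedComponentMk v).supp = f ⁻¹' {f v} := by
  ext u
  simp [ConnectedComponent.mem_supp_iff, ConnectedComponent.eq, hf]

theorem natCard_connectedComponent_supp_eq_of_reachable_iff
    (hf : ∀ u v, G.Reachable u v ↔ f u = f v) (hs : Function.Surjective f)
    (k : ℕ) : Nat.card {C : G.ConnectedComponent // Nat.card C.supp = k}
      = Nat.card {b : α // Nat.card (f ⁻¹' {b}) = k} :=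
  Nat.card_congr <| (ConnectedComponent.equivOfReachableIff hf hs).subtypeEquiv fun C =>
    C.ind fun v => by rw [ConnectedComponent.supp_eq_preimage hf]; rfl

end Fibres

end SimpleGraph

theorem Hgraph_compl_adj_inl_inr {a : ℕ} (i j : Fin a) :
    (Hgraph a 0)ᶜ.Adj (.inl i) (.inr j) ↔ i ≠ j := by
  simp [Hgraph, SimpleGraph.compl_adj, Fin.val_eq_val, eq_comm]

theorem Hgraph_compl_connected {a : ℕ} (ha : 3 ≤ a) : (Hgraph a 0)ᶜ.Connected := by
  have reach_inl (i j : Fin a) : (Hgraph a 0)ᶜ.Reachable (.inl i) (.inl j) := by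
    obtain ⟨k, hki, hkj⟩ := Fin.exists_ne_and_ne_of_two_lt i j (by omega)
    exact ((Hgraph_compl_adj_inl_inr i k).2 hki.symm).reachable.trans
      ((Hgraph_compl_adj_inl_inr j k).2 hkj.symm).symm.reachable
  let i₀ : Fin a := ⟨0, by omega⟩
  refine (SimpleGraph.connected_iff_exists_forall_reachable _).2 ⟨.inl i₀, ?_⟩
  rintro (j | j)
  · exact reach_inl i₀ j
  · obtain ⟨k, hkj, -⟩ := Fin.exists_ne_and_ne_of_two_lt j j (by omega)
    exact (reach_inl i₀ k).trans ((Hgraph_compl_adj_inl_inr k j).2 hkj).reachable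

namespace Jgraph

variable {r a t : ℕ}

-- The components of `J_r(a,t)ᶜ` are indexed by the pairs of classes `2n, 2n + 1` with `n < t`
-- and by the single classes `i ≥ 2t`; `block r t i` is the index of the one containing class `i`.
def block (r t : ℕ) (i : Fin r) : Fin t ⊕ Fin (r - 2 * t) :=
  if h : (i : ℕ) < 2 * t then .inl ⟨i / 2, by omega⟩ else .inr ⟨i - 2 * t, by omega⟩

theorem block_eq_inl_iff {i : Fin r} {n : Fin t} :
    block r t i = .inl n ↔ (i : ℕ) = 2 * n ∨ (i : ℕ) = 2 * n + 1 := by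
  unfold block
  split_ifs <;> simp [Fin.ext_iff] <;> omega

theorem block_eq_inr_iff {i : Fin r} {m : Fin (r - 2 * t)} :
    block r t i = .inr m ↔ (i : ℕ) = 2 * t + m := by
  unfold block
  split_ifs <;> simp [Fin.ext_iff] <;> omega

theorem compl_adj_iff (x y : Fin r × Fin a) :
    (Jgraph r a t)ᶜ.Adj x y ↔
      block r t x.1 = block r t y.1 ∧ (x.1 ≠ y.1 ∨ 2 * t ≤ x.1) ∧ x.2 ≠ y.2 := by
  obtain ⟨⟨i, hi⟩, u⟩ := x
  obtain ⟨⟨j, hj⟩, v⟩ := y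
  simp only [SimpleGraph.compl_adj, Jgraph, block]
  split_ifs <;> simp_all [Prod.ext_iff, Fin.ext_iff] <;> omega

def pairHom (htr : 2 * t ≤ r) (n : Fin t) : (Hgraph a 0)ᶜ →g (Jgraph r a t)ᶜ where
  toFun := Sum.elim (fun u => (⟨2 * n, by omega⟩, u)) (fun u => (⟨2 * n + 1, by omega⟩, u))
  map_rel' := by
    have h₀ : block r t ⟨2 * n, by omega⟩ = .inl n := block_eq_inl_iff.2 (.inl rfl)
    have h₁ : block r t ⟨2 * n + 1, by omega⟩ = .inl n := block_eq_inl_iff.2 (.inr rfl)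
    rintro (u | u) (v | v) h <;> rw [compl_adj_iff] <;>
      simp_all [SimpleGraph.compl_adj, Hgraph, Fin.ext_iff, eq_comm]

theorem mem_range_pairHom (htr : 2 * t ≤ r) {x : Fin r × Fin a} {n : Fin t}
    (hx : block r t x.1 = .inl n) : x ∈ Set.range (pairHom htr n) := by
  rw [block_eq_inl_iff] at hx
  rcases hx with hx | hx
  · exact ⟨.inl x.2, Prod.ext (Fin.ext hx.symm) rfl⟩
  · exact ⟨.inr x.2, Prod.ext (Fin.ext hx.symm) rfl⟩

theorem compl_reachable_iff (ha : 3 ≤ a) (htr : 2 * t ≤ r) (x y : Fin r × Fin a) :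
    (Jgraph r a t)ᶜ.Reachable x y ↔ block r t x.1 = block r t y.1 := by
  refine ⟨fun h => h.apply_eq_of_adj fun _ _ hadj => ((compl_adj_iff _ _).1 hadj).1, fun h => ?_⟩
  cases hx : block r t x.1 with
  | inl n =>
    obtain ⟨z, rfl⟩ := mem_range_pairHom htr hx
    obtain ⟨w, rfl⟩ := mem_range_pairHom htr (h ▸ hx)
    exact ((Hgraph_compl_connected ha).preconnected z w).map _
  | inr m =>
    have hy := h ▸ hx
    rw [block_eq_inr_iff] at hx hy
    by_cases hxy : x.2 = y.2
    · rw [Prod.ext (Fin.ext (hx.trans hy.symm)) hxy]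
    · exact ((compl_adj_iff x y).2 ⟨h, .inr (by omega), hxy⟩).reachable

theorem natCard_block_fibre (htr : 2 * t ≤ r) (b : Fin t ⊕ Fin (r - 2 * t)) :
    Nat.card (block r t ⁻¹' {b}) = Sum.elim (fun _ => 2) (fun _ => 1) b := by
  rw [Nat.card_coe_set_eq]
  cases b with
  | inl n =>
    have : block r t ⁻¹' {.inl n} = {⟨2 * n, by omega⟩, ⟨2 * n + 1, by omega⟩} := by
      ext i
      simp [block_eq_inl_iff, Fin.ext_iff]
    rw [this, Set.ncard_pair (by simp [Fin.ext_iff])]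
    rfl
  | inr m =>
    have : block r t ⁻¹' {.inr m} = {⟨2 * t + m, by omega⟩} := by
      ext i
      simp [block_eq_inr_iff, Fin.ext_iff]
    rw [this, Set.ncard_singleton]
    rfl

theorem natCard_vertex_fibre (htr : 2 * t ≤ r) (b : Fin t ⊕ Fin (r - 2 * t)) :
    Nat.card ((fun x : Fin r × Fin a => block r t x.1) ⁻¹' {b})
      = Sum.elim (fun _ => 2 * a) (fun _ => a) b := by
  calc Nat.card ((fun x : Fin r × Fin a => block r t x.1) ⁻¹' {b})
      = Nat.card ((block r t ⁻¹' {b}) × Fin a) :=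
        Nat.card_congr (Equiv.prodSubtypeFstEquivSubtypeProd (p := (· ∈ block r t ⁻¹' {b})))
    _ = Sum.elim (fun _ => 2 * a) (fun _ => a) b := by
      rw [Nat.card_prod, natCard_block_fibre htr, Nat.card_fin]
      cases b <;> simp

theorem block_surjective (htr : 2 * t ≤ r) : Function.Surjective (block r t)
  | .inl n => ⟨⟨2 * n, by omega⟩, block_eq_inl_iff.2 (.inl rfl)⟩
  | .inr m => ⟨⟨2 * t + m, by omega⟩, block_eq_inr_iff.2 rfl⟩

theorem natCard_compl_connectedComponent_supp_eq (ha : 3 ≤ a) (htr : 2 * t ≤ r) (k : ℕ) :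
    Nat.card {C : (Jgraph r a t)ᶜ.ConnectedComponent // Nat.card C.supp = k}
      = (if 2 * a = k then t else 0) + (if a = k then r - 2 * t else 0) := by
  have : NeZero a := ⟨by omega⟩
  rw [SimpleGraph.natCard_connectedComponent_supp_eq_of_reachable_iff
    (compl_reachable_iff ha htr) ((block_surjective htr).comp Prod.fst_surjective)]
  simp_rw [natCard_vertex_fibre htr]
  rw [Nat.card_congr Equiv.subtypeSum, Nat.card_sum]
  congr 1 <;> split_ifs with h <;> simp [h]

theorem natCard_compl_components (ha : 3 ≤ a) (htr : 2 * t ≤ r) :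
    Nat.card {C : (Jgraph r a t)ᶜ.ConnectedComponent // Nat.card C.supp = a} = r - 2 * t ∧
      Nat.card {C : (Jgraph r a t)ᶜ.ConnectedComponent // Nat.card C.supp = 2 * a} = t := by
  have h2a : 2 * a ≠ a := by omega
  simp only [natCard_compl_connectedComponent_supp_eq ha htr, if_neg h2a, if_neg h2a.symm,
    ↓reduceIte, zero_add, add_zero, and_self]

end Jgraph

/-- For `a ≥ 3` the complement of `H_0(a)` is connected; consequently the complement of
`J_r(a,t)` has exactly `r − 2t` components of size `a` and `t` of size `2a`, and the
graphs `J_r(a,t)`, `0 ≤ t ≤ ⌊r/2⌋`, are pairwise non-isomorphic. -/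
theorem Jgraph_pairwise_nonisomorphic (a : ℕ) (ha : 3 ≤ a) :
    ((Hgraph a 0)ᶜ).Connected ∧
    ∀ r : ℕ, 2 ≤ r → ∀ t, t ≤ r / 2 →
      (Nat.card {C : (Jgraph r a t)ᶜ.ConnectedComponent // Nat.card C.supp = a}
          = r - 2 * t ∧
       Nat.card {C : (Jgraph r a t)ᶜ.ConnectedComponent // Nat.card C.supp = 2 * a}
          = t) ∧
      ∀ t', t' ≤ r / 2 → t ≠ t' → ¬ Nonempty (Jgraph r a t ≃g Jgraph r a t') := by
  refine ⟨Hgraph_compl_connected ha, fun r _ t ht => ?_⟩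
  have count {s : ℕ} (hs : s ≤ r / 2) :=
    Jgraph.natCard_compl_components (r := r) (t := s) ha (by omega)
  refine ⟨count ht, fun t' ht' hne ⟨φ⟩ => hne ?_⟩
  rw [← (count ht).2, ← (count ht').2]
  exact φ.compl.natCard_connectedComponent_supp_eq (2 * a)
end

section
/- Let r ≥ 2 and a ≥ r+2, and let H be a graph on n = a·r vertices with D(H,x) = D(K_r(a),x). Define an auxiliary graph F on V(H) whose edges are the pairs {u,v} that form a dominating set of H. Then F is K_{r+1}-free. -/
/-- The auxiliary graph on `V(H)` whose edges are the dominating pairs of `H`. -/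
def auxGraph {W : Type*} (H : SimpleGraph W) : SimpleGraph W where
  Adj u v := u ≠ v ∧ Dominates H {u, v}
  symm := ⟨by rintro u v ⟨h1, h2⟩; exact ⟨h1.symm, by rwa [Set.pair_comm]⟩⟩
  loopless := ⟨fun u h => h.1 rfl⟩

/-!
A set fails to dominate `H` iff it lies inside some `Y_v = V \ N[v]`. In `K_r(a)` every
`a`-set dominates and exactly the `n` sets `Y_v` (a part minus a vertex) are non-dominating
`(a-1)`-sets. Equal domination polynomials transfer both counts to `H`: first every `|Y_v| < a`,
and then, as the non-dominating `(a-1)`-sets of `H` are among the `Y_v`, every `|Y_v| = a - 1`.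
A `K_{r+1}` in the auxiliary graph gives `r + 1` pairwise disjoint sets `Y_v`, so
`(r + 1)(a - 1) ≤ a r`, i.e. `a ≤ r + 1`.
-/

open Finset SimpleGraph

namespace SimpleGraph

section Domination

variable {V : Type*} [Fintype V] (G : SimpleGraph V)

open scoped Classical in
/-- The set `Y_v = V \ N[v]`. -/
noncomputable def closedNbhdCompl (v : V) : Finset V := {w | w ≠ v ∧ ¬ G.Adj v w}

open scoped Classical in
noncomputable def nonDominatingSets (i : ℕ) : Finset (Finset V) :=
  (powersetCard i univ).filter fun S : Finset V => ¬ Dominates G S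

variable {G}

theorem mem_closedNbhdCompl {v w : V} : w ∈ G.closedNbhdCompl v ↔ w ≠ v ∧ ¬ G.Adj v w := by
  simp [closedNbhdCompl]

theorem mem_closedNbhdCompl_comm {v w : V} :
    w ∈ G.closedNbhdCompl v ↔ v ∈ G.closedNbhdCompl w := by
  simp only [mem_closedNbhdCompl, ne_comm, G.adj_comm]

theorem not_dominates_iff {S : Set V} : ¬ Dominates G S ↔ ∃ v, S ⊆ G.closedNbhdCompl v := by
  simp only [Dominates, not_forall, not_or, not_exists, not_and, Set.subset_def, mem_coe,
    mem_closedNbhdCompl]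
  refine exists_congr fun v => ⟨fun ⟨hv, hadj⟩ w hw => ⟨?_, fun h => hadj w hw h.symm⟩,
    fun h => ⟨fun hv => (h v hv).1 rfl, fun w hw hadj => (h w hw).2 hadj.symm⟩⟩
  rintro rfl
  exact hv hw

theorem dominates_pair_iff {u v : V} :
    Dominates G {u, v} ↔ Disjoint (G.closedNbhdCompl u) (G.closedNbhdCompl v) := by
  rw [← not_not (a := Dominates G _), not_dominates_iff, Finset.disjoint_left]
  simp only [Set.insert_subset_iff, Set.singleton_subset_iff, mem_coe, not_exists, not_and]
  exact forall_congr' fun w => by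
    rw [mem_closedNbhdCompl_comm (v := w), mem_closedNbhdCompl_comm (v := w)]

theorem mem_nonDominatingSets {i : ℕ} {S : Finset V} :
    S ∈ G.nonDominatingSets i ↔ #S = i ∧ ∃ v, S ⊆ G.closedNbhdCompl v := by
  simp [nonDominatingSets, not_dominates_iff]

variable (G)

theorem numDom_add_card_nonDominatingSets (i : ℕ) :
    numDom G i + #(G.nonDominatingSets i) = (Fintype.card V).choose i := by
  classical
  have : numDom G i = #((powersetCard i univ).filter fun S : Finset V => Dominates G S) := by
    rw [numDom, Nat.card_eq_fintype_card, Fintype.card_subtype]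
    congr 1
    ext S
    simp
  rw [this, nonDominatingSets, card_filter_add_card_filter_not, card_powersetCard, card_univ]

theorem numDom_eq_zero_of_card_lt {i : ℕ} (hi : Fintype.card V < i) : numDom G i = 0 := by
  rw [numDom, Nat.card_eq_zero]
  exact Or.inl ⟨fun ⟨S, hS, _⟩ => (hS ▸ S.card_le_univ).not_gt hi⟩

theorem coeff_domPoly {i : ℕ} (hi : 1 ≤ i) : (domPoly G).coeff i = numDom G i := by
  simp only [domPoly, Polynomial.finsetSum_coeff, Polynomial.coeff_natCast_mul,
    Polynomial.coeff_X_pow, mul_ite, mul_one, mul_zero, sum_ite_eq, mem_Icc, hi, true_and,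
    ite_eq_left_iff, not_le]
  intro hiV
  simp [numDom_eq_zero_of_card_lt G hiV]

variable {G}

theorem card_nonDominatingSets_eq_of_domPoly_eq {V' : Type*} [Fintype V'] {G' : SimpleGraph V'}
    (hV : Fintype.card V = Fintype.card V') (hD : domPoly G = domPoly G') {i : ℕ} (hi : 1 ≤ i) :
    #(G.nonDominatingSets i) = #(G'.nonDominatingSets i) := by
  have hnum : (numDom G i : ℤ) = numDom G' i := by
    rw [← coeff_domPoly G hi, ← coeff_domPoly G' hi, hD]
  have hG := numDom_add_card_nonDominatingSets G i
  have hG' := numDom_add_card_nonDominatingSets G' i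
  rw [hV] at hG
  omega

theorem nonDominatingSets_eq_empty_iff {i : ℕ} :
    G.nonDominatingSets i = ∅ ↔ ∀ v, #(G.closedNbhdCompl v) < i := by
  simp only [Finset.eq_empty_iff_forall_notMem, mem_nonDominatingSets, not_and, not_exists]
  refine ⟨fun h v => ?_, fun h S hS v hSv => (hS ▸ card_le_card hSv).not_gt (h v)⟩
  by_contra! hv
  obtain ⟨S, hSv, hS⟩ := exists_subset_card_eq hv
  exact h S hS v hSv

theorem nonDominatingSets_eq_image [DecidableEq V] {k : ℕ}
    (h : ∀ v, #(G.closedNbhdCompl v) ≤ k) :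
    G.nonDominatingSets k =
      ({v | #(G.closedNbhdCompl v) = k} : Finset V).image G.closedNbhdCompl := by
  ext S
  simp only [mem_nonDominatingSets, mem_image, mem_filter, mem_univ, true_and]
  constructor
  · rintro ⟨hS, v, hSv⟩
    obtain rfl := eq_of_subset_of_card_le hSv (hS ▸ h v)
    exact ⟨v, hS, rfl⟩
  · rintro ⟨v, hv, rfl⟩
    exact ⟨hv, v, subset_rfl⟩

theorem card_closedNbhdCompl_eq_of_card_le {k : ℕ} (h : ∀ v, #(G.closedNbhdCompl v) ≤ k)
    (hcard : Fintype.card V ≤ #(G.nonDominatingSets k)) (v : V) :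
    #(G.closedNbhdCompl v) = k := by
  classical
  rw [nonDominatingSets_eq_image h] at hcard
  have hfull : #({v | #(G.closedNbhdCompl v) = k} : Finset V) = Fintype.card V :=
    le_antisymm (card_le_univ _) (hcard.trans card_image_le)
  have hv : v ∈ ({v | #(G.closedNbhdCompl v) = k} : Finset V) := by
    rw [eq_univ_of_card _ hfull]; exact mem_univ v
  simpa using hv

theorem card_nonDominatingSets_of_injective {k : ℕ} (h : ∀ v, #(G.closedNbhdCompl v) = k)
    (hinj : Function.Injective G.closedNbhdCompl) :
    #(G.nonDominatingSets k) = Fintype.card V := by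
  classical
  rw [nonDominatingSets_eq_image (fun v => (h v).le), card_image_of_injective _ hinj]
  simp [h]

theorem mul_le_card_of_isNClique_auxGraph {k n : ℕ} (h : ∀ v, #(G.closedNbhdCompl v) = k)
    {t : Finset V} (ht : (auxGraph G).IsNClique n t) : n * k ≤ Fintype.card V := by
  classical
  have hdisj : (t : Set V).PairwiseDisjoint G.closedNbhdCompl :=
    fun u hu v hv huv => dominates_pair_iff.mp (ht.isClique hu hv huv).2
  calc n * k = ∑ v ∈ t, #(G.closedNbhdCompl v) := by simp [h, ht.card_eq]
    _ = #(t.biUnion G.closedNbhdCompl) := (card_biUnion hdisj).symm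
    _ ≤ Fintype.card V := card_le_univ _

end Domination

section CompleteMultipartite

variable {ι : Type*} [Fintype ι] {V : ι → Type*} [∀ i, Fintype (V i)]

theorem mem_closedNbhdCompl_completeMultipartiteGraph {v w : Σ i, V i} :
    w ∈ (completeMultipartiteGraph V).closedNbhdCompl v ↔ w ≠ v ∧ w.1 = v.1 := by
  simp [mem_closedNbhdCompl, eq_comm]

theorem card_closedNbhdCompl_completeMultipartiteGraph (v : Σ i, V i) :
    #((completeMultipartiteGraph V).closedNbhdCompl v) = Fintype.card (V v.1) - 1 := by
  classical
  have : (completeMultipartiteGraph V).closedNbhdCompl v =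
      (univ.map (Function.Embedding.sigmaMk v.1)).erase v := by
    ext ⟨i, x⟩
    simp only [mem_closedNbhdCompl_completeMultipartiteGraph, mem_erase, mem_map, mem_univ,
      true_and, Function.Embedding.sigmaMk_apply]
    exact and_congr_right fun _ =>
      ⟨by rintro rfl; exact ⟨x, rfl⟩, fun ⟨_, h⟩ => (congrArg Sigma.fst h).symm⟩
  rw [this, card_erase_of_mem (by simp), card_map, card_univ]

theorem closedNbhdCompl_completeMultipartiteGraph_injective (h : ∀ i, 1 < Fintype.card (V i)) :
    Function.Injective (completeMultipartiteGraph V).closedNbhdCompl := by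
  intro u v huv
  by_contra hne
  obtain ⟨w, hw⟩ : ((completeMultipartiteGraph V).closedNbhdCompl v).Nonempty := by
    rw [← card_pos, card_closedNbhdCompl_completeMultipartiteGraph]
    have := h v.1
    omega
  have hwv := mem_closedNbhdCompl_completeMultipartiteGraph.mp hw
  have hwu := mem_closedNbhdCompl_completeMultipartiteGraph.mp (huv ▸ hw)
  have hu : u ∈ (completeMultipartiteGraph V).closedNbhdCompl v :=
    mem_closedNbhdCompl_completeMultipartiteGraph.mpr ⟨hne, hwu.2.symm.trans hwv.2⟩
  exact (mem_closedNbhdCompl_completeMultipartiteGraph.mp (huv ▸ hu)).1 rfl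

end CompleteMultipartite

end SimpleGraph

theorem auxGraph_cliqueFree_general {r a : ℕ} (ha : r + 2 ≤ a) {W : Type*}
    [Fintype W] (H : SimpleGraph W) (hcard : Fintype.card W = a * r)
    (hD : domPoly H = domPoly (SimpleGraph.completeMultipartiteGraph fun _ : Fin r => Fin a)) :
    (auxGraph H).CliqueFree (r + 1) := by
  set K := completeMultipartiteGraph fun _ : Fin r => Fin a
  have hK (v) : #(K.closedNbhdCompl v) = a - 1 := by
    simpa using card_closedNbhdCompl_completeMultipartiteGraph v
  have hWK : Fintype.card W = Fintype.card (Σ _ : Fin r, Fin a) := by simp [hcard, mul_comm]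
  have hsmall : ∀ v, #(H.closedNbhdCompl v) < a := by
    rw [← nonDominatingSets_eq_empty_iff, ← card_eq_zero,
      card_nonDominatingSets_eq_of_domPoly_eq hWK hD (by omega), card_eq_zero,
      nonDominatingSets_eq_empty_iff]
    intro v
    rw [hK]
    omega
  have hY : ∀ v, #(H.closedNbhdCompl v) = a - 1 := by
    refine card_closedNbhdCompl_eq_of_card_le (fun v => Nat.le_pred_of_lt (hsmall v)) ?_
    rw [card_nonDominatingSets_eq_of_domPoly_eq hWK hD (by omega),
      card_nonDominatingSets_of_injective hK
        (closedNbhdCompl_completeMultipartiteGraph_injective fun _ => by rw [Fintype.card_fin]; omega), hWK]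
  intro t ht
  have := mul_le_card_of_isNClique_auxGraph hY ht
  rw [hcard] at this
  obtain ⟨c, rfl⟩ : ∃ c, a = c + 1 := ⟨a - 1, by omega⟩
  rw [Nat.add_sub_cancel] at this
  nlinarith

/-- If `r ≥ 2`, `a ≥ r+2` and `D(H,x) = D(K_r(a),x)`, then the auxiliary graph of
dominating pairs of `H` is `K_{r+1}`-free. -/
theorem auxGraph_cliqueFree {r a : ℕ} (hr : 2 ≤ r) (ha : r + 2 ≤ a) {W : Type*}
    [Fintype W] (H : SimpleGraph W) (hcard : Fintype.card W = a * r)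
    (hD : domPoly H = domPoly (SimpleGraph.completeMultipartiteGraph fun _ : Fin r => Fin a)) :
    (auxGraph H).CliqueFree (r + 1) :=
  auxGraph_cliqueFree_general ha H hcard hD
end
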